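/- arXiv:2602.00878 — 4 statements merged into one kernel-verified Lean document; each statement's English description precedes it below -/
import Mathlib

section
/- Let x ∈ (0,1), α > 0, H ≥ 2 an integer, and n_1,…,n_H positive integers. On a probability space let G_1,…,G_H, G* be jointly independent real random variables with G_h distributed Gamma(n_h, 1) for each h and G* distributed Gamma(α, 1). Set T = G* + Σ_{h=1}^H G_h and π_h = G_h / T. Then for any two distinct indices r, s ∈ {1,…,H}: E[ ∏_{h=1}^H (max(1 − x/π_h, 0))^{n_h} ] ≤ E[ (max(1 − x/(π_r + π_s), 0))^{n_r + n_s} · ∏_{h ≠ r,s} (max(1 − x/π_h, 0))^{n_h} ]. (Equivalently: merging two clusters of a partition increases the survival probability P(u_min > x) of the minimum slice variable, since conditionally on weights (π_1,…,π_H, π*) ~ Dirichlet(n_1,…,n_H, α) and independent slice variables u_i ~ Uniform(0, π_{c_i}), one has P(u_min > x | ρ_n) = E[∏_h (max(1 − x/π_h,0))^{n_h}].) -/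
open MeasureTheory ProbabilityTheory Finset

/-!
Almost surely every `G_h` and `G*` is positive, and then the inequality already holds
pointwise: `u ↦ (1 - x / u)₊` is monotone on `(0, ∞)` with values in `[0, 1]`, so replacing
the bases of both factors `(1 - x/π_r)₊^{n_r}` and `(1 - x/π_s)₊^{n_s}` by the larger
`(1 - x/(π_r + π_s))₊` can only increase the product. Integrating gives the claim.
-/

lemma gammaMeasure_ae_pos (a r : ℝ) : ∀ᵐ y ∂gammaMeasure a r, 0 < y := by
  have hnonpos : {y : ℝ | ¬ 0 < y} = Set.Iic 0 := by ext y; simp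
  rw [ae_iff, hnonpos, gammaMeasure, withDensity_apply _ measurableSet_Iic,
    setLIntegral_congr (Iio_ae_eq_Iic (a := (0 : ℝ))).symm]
  exact lintegral_gammaPDF_of_nonpos le_rfl

lemma ae_pos_of_map_eq_gammaMeasure {Ω : Type*} [MeasurableSpace Ω] {P : Measure Ω}
    {f : Ω → ℝ} (hf : Measurable f) {a r : ℝ} (hfd : P.map f = gammaMeasure a r) :
    ∀ᵐ ω ∂P, 0 < f ω :=
  ae_of_ae_map hf.aemeasurable (hfd ▸ gammaMeasure_ae_pos a r)

section Truncation

variable {x : ℝ}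

lemma max_one_sub_div_le_one (hx : 0 ≤ x) {u : ℝ} (hu : 0 ≤ u) : max (1 - x / u) 0 ≤ 1 :=
  max_le (by linarith [div_nonneg hx hu]) zero_le_one

lemma max_one_sub_div_mono (hx : 0 ≤ x) {u v : ℝ} (hu : 0 < u) (huv : u ≤ v) :
    max (1 - x / u) 0 ≤ max (1 - x / v) 0 :=
  max_le_max_right 0 (sub_le_sub_left (div_le_div_of_nonneg_left hx hu huv) 1)

variable {ι : Type*} [Fintype ι] [DecidableEq ι]

lemma prod_max_one_sub_div_pow_le_merge (hx : 0 ≤ x) {p : ι → ℝ} (hp : ∀ i, 0 < p i)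
    (m : ι → ℕ) {r s : ι} (hrs : r ≠ s) :
    ∏ i, max (1 - x / p i) 0 ^ m i
      ≤ max (1 - x / (p r + p s)) 0 ^ (m r + m s)
        * ∏ i ∈ univ \ {r, s}, max (1 - x / p i) 0 ^ m i := by
  rw [← prod_sdiff (subset_univ {r, s}), prod_pair hrs, mul_comm, pow_add]
  gcongr ?_ ^ _ * ?_ ^ _ * _
  · exact max_one_sub_div_mono hx (hp r) (le_add_of_nonneg_right (hp s).le)
  · exact max_one_sub_div_mono hx (hp s) (le_add_of_nonneg_left (hp r).le)

end Truncation

theorem stmt0_general {Ω : Type*} [MeasurableSpace Ω] (P : Measure Ω) [IsProbabilityMeasure P]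
    (x α : ℝ) (hx : x ∈ Set.Ioo (0:ℝ) 1)
    (H : ℕ) (m : Fin H → ℕ)
    (G : Fin H → Ω → ℝ) (Gstar : Ω → ℝ)
    (hGm : ∀ h, Measurable (G h)) (hGsm : Measurable Gstar)
    (hGd : ∀ h, Measure.map (G h) P = gammaMeasure (m h) 1)
    (hGsd : Measure.map Gstar P = gammaMeasure α 1)
    (r s : Fin H) (hrs : r ≠ s) :
    (∫ ω, ∏ h, (max (1 - x / (G h ω / (Gstar ω + ∑ h', G h' ω))) 0) ^ m h ∂P)
      ≤ ∫ ω,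
          (max (1 - x / ((G r ω + G s ω) / (Gstar ω + ∑ h', G h' ω))) 0) ^ (m r + m s)
          * ∏ h ∈ Finset.univ \ {r, s},
              (max (1 - x / (G h ω / (Gstar ω + ∑ h', G h' ω))) 0) ^ m h ∂P := by
  have hx0 : 0 ≤ x := hx.1.le
  have hpos : ∀ᵐ ω ∂P, ∀ h, 0 < G h ω / (Gstar ω + ∑ h', G h' ω) := by
    filter_upwards [ae_pos_of_map_eq_gammaMeasure hGsm hGsd,
      ae_all_iff.2 fun h => ae_pos_of_map_eq_gammaMeasure (hGm h) (hGd h)] with ω hGs hG h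
    exact div_pos (hG h) (add_pos_of_pos_of_nonneg hGs (sum_nonneg fun h' _ => (hG h').le))
  refine integral_mono_of_nonneg (ae_of_all _ fun ω => by positivity) ?_ ?_
  · refine Integrable.of_bound (by fun_prop) 1 ?_
    filter_upwards [hpos] with ω hπ
    rw [Real.norm_of_nonneg (by positivity), add_div]
    exact mul_le_one₀
      (pow_le_one₀ (by positivity) (max_one_sub_div_le_one hx0 (add_pos (hπ r) (hπ s)).le))
      (by positivity) (prod_le_one (fun h _ => by positivity)
        fun h _ => pow_le_one₀ (by positivity) (max_one_sub_div_le_one hx0 (hπ h).le))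
  · filter_upwards [hpos] with ω hπ
    simpa only [add_div] using prod_max_one_sub_div_pow_le_merge hx0 hπ m hrs

/-- Proposition 1 (merging two clusters increases the survival probability of the
minimum slice variable), via the Gamma representation of the Dirichlet distribution:
with `G_h ~ Gamma(n_h, 1)`, `G* ~ Gamma(α, 1)` jointly independent,
`T = G* + Σ_h G_h`, `π_h = G_h / T`, for distinct `r, s`:
`E[∏_h ((1 − x/π_h)₊)^{n_h}]
  ≤ E[((1 − x/(π_r + π_s))₊)^{n_r + n_s} ∏_{h ≠ r,s} ((1 − x/π_h)₊)^{n_h}]`. -/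
theorem stmt0 {Ω : Type*} [MeasurableSpace Ω] (P : Measure Ω) [IsProbabilityMeasure P]
    (x α : ℝ) (hx : x ∈ Set.Ioo (0:ℝ) 1) (hα : 0 < α)
    (H : ℕ) (hH : 2 ≤ H) (m : Fin H → ℕ) (hm : ∀ h, 0 < m h)
    (G : Fin H → Ω → ℝ) (Gstar : Ω → ℝ)
    (hGm : ∀ h, Measurable (G h)) (hGsm : Measurable Gstar)
    (hindep : iIndepFun
      (fun j : Option (Fin H) => Option.elim j Gstar G) P)
    (hGd : ∀ h, Measure.map (G h) P = gammaMeasure (m h) 1)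
    (hGsd : Measure.map Gstar P = gammaMeasure α 1)
    (r s : Fin H) (hrs : r ≠ s) :
    (∫ ω, ∏ h, (max (1 - x / (G h ω / (Gstar ω + ∑ h', G h' ω))) 0) ^ m h ∂P)
      ≤ ∫ ω,
          (max (1 - x / ((G r ω + G s ω) / (Gstar ω + ∑ h', G h' ω))) 0) ^ (m r + m s)
          * ∏ h ∈ Finset.univ \ {r, s},
              (max (1 - x / (G h ω / (Gstar ω + ∑ h', G h' ω))) 0) ^ m h ∂P :=
  stmt0_general P x α hx H m G Gstar hGm hGsm hGd hGsd r s hrs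
end

section
/- Let n_r, n_s be positive integers and y ∈ (0,1), and let S be a random variable with the Beta(n_r, n_s) distribution on (0,1), i.e., with density s^{n_r − 1}(1 − s)^{n_s − 1}/B(n_r, n_s) where B is the Beta function. Then E[ (max(1 − y/S, 0))^{n_r} · (max(1 − y/(1 − S), 0))^{n_s} ] ≤ (1 − y)^{n_r + n_s}. -/
open MeasureTheory

/-- The `Beta(a, b)` distribution on `(0,1)` for positive integer parameters, with
density `s^{a−1} (1−s)^{b−1} / B(a,b)` where `B(a,b) = Γ(a)Γ(b)/Γ(a+b)`. -/
noncomputable def betaMeasureNat (a b : ℕ) : Measure ℝ :=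
  (volume.restrict (Set.Ioo (0:ℝ) 1)).withDensity
    (fun s => ENNReal.ofReal (s ^ (a - 1) * (1 - s) ^ (b - 1) /
      (Real.Gamma a * Real.Gamma b / Real.Gamma (a + b))))

/-- Key merge inequality: if `S ~ Beta(n_r, n_s)` and `y ∈ (0,1)`, then
`E[((1 − y/S)₊)^{n_r} ((1 − y/(1−S))₊)^{n_s}] ≤ (1 − y)^{n_r + n_s}`. -/
theorem stmt7 {Ω : Type*} [MeasurableSpace Ω] (P : Measure Ω) [IsProbabilityMeasure P]
    (nr ns : ℕ) (hnr : 0 < nr) (hns : 0 < ns) (y : ℝ) (hy : y ∈ Set.Ioo (0:ℝ) 1)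
    (S : Ω → ℝ) (hSm : Measurable S) (hSd : Measure.map S P = betaMeasureNat nr ns) :
    (∫ ω, (max (1 - y / S ω) 0) ^ nr * (max (1 - y / (1 - S ω)) 0) ^ ns ∂P)
      ≤ (1 - y) ^ (nr + ns) := by
  obtain ⟨hy0, hy1⟩ := hy
  set f : Ω → ℝ := fun ω => (max (1 - y / S ω) 0) ^ nr * (max (1 - y / (1 - S ω)) 0) ^ ns
    with hf
  have hfm : Measurable f := by
    apply Measurable.mul
    · exact ((measurable_const.sub (measurable_const.div hSm)).max measurable_const).pow_const nr
    · exact ((measurable_const.sub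
        (measurable_const.div (measurable_const.sub hSm))).max measurable_const).pow_const ns
  have hfnn : ∀ ω, 0 ≤ f ω := fun ω =>
    mul_nonneg (pow_nonneg (le_max_right _ _) _) (pow_nonneg (le_max_right _ _) _)
  -- a.e., S ω ∈ (0,1)
  have hSae : ∀ᵐ ω ∂P, S ω ∈ Set.Ioo (0:ℝ) 1 := by
    rw [ae_iff]
    have hset : {ω | ¬ S ω ∈ Set.Ioo (0:ℝ) 1} = S ⁻¹' (Set.Ioo (0:ℝ) 1)ᶜ := rfl
    rw [hset, ← Measure.map_apply hSm measurableSet_Ioo.compl, hSd]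
    unfold betaMeasureNat
    rw [withDensity_apply _ measurableSet_Ioo.compl,
      Measure.restrict_restrict measurableSet_Ioo.compl, Set.compl_inter_self,
      Measure.restrict_empty, lintegral_zero_measure]
  -- a.e. pointwise bound
  have hbound : ∀ᵐ ω ∂P, f ω ≤ (1 - y) ^ (nr + ns) := by
    filter_upwards [hSae] with ω hω
    obtain ⟨h0, h1⟩ := hω
    have hy' : (0:ℝ) ≤ 1 - y := by linarith
    have key : ∀ s : ℝ, 0 < s → s < 1 → max (1 - y / s) 0 ≤ 1 - y := by
      intro s hs0 hs1
      refine max_le ?_ hy'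
      have : y ≤ y / s := by
        rw [le_div_iff₀ hs0]
        exact mul_le_of_le_one_right hy0.le hs1.le
      linarith
    have h1' : max (1 - y / S ω) 0 ≤ 1 - y := key _ h0 h1
    have h2' : max (1 - y / (1 - S ω)) 0 ≤ 1 - y := key _ (by linarith) (by linarith)
    calc f ω ≤ (1 - y) ^ nr * (1 - y) ^ ns := by
          apply mul_le_mul (pow_le_pow_left₀ (le_max_right _ _) h1' nr)
            (pow_le_pow_left₀ (le_max_right _ _) h2' ns)
            (pow_nonneg (le_max_right _ _) _) (pow_nonneg hy' _)
      _ = (1 - y) ^ (nr + ns) := (pow_add _ _ _).symm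
  have hint : Integrable f P := by
    refine (integrable_const ((1 - y) ^ (nr + ns))).mono'
      hfm.aestronglyMeasurable ?_
    filter_upwards [hbound] with ω hω
    rw [Real.norm_of_nonneg (hfnn ω)]
    exact hω
  calc (∫ ω, f ω ∂P) ≤ ∫ _, (1 - y) ^ (nr + ns) ∂P :=
        integral_mono_ae hint (integrable_const _) hbound
    _ = (1 - y) ^ (nr + ns) := by simp
end

section
/- Let β > 1 and x ∈ (0,1). Then β·[ ∫_0^x (1 − w)^{β − 1} dw + x·∫_x^1 w^{−1}·(1 − w)^{β − 1} dw ] ≤ β·x·(1 + log(1/x)). Equivalently: if w ~ Beta(1, β) (with density β(1 − w)^{β − 1} on (0,1)) and, conditionally on w, u is uniform on (0, w), then P(u ≤ x) = β·[∫_0^x (1−w)^{β−1} dw + x∫_x^1 w^{−1}(1−w)^{β−1} dw] ≤ β·x·(1 + log(1/x)). -/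
/-- For `β > 1` and `x ∈ (0,1)`, the probability that a slice variable `u`,
uniform on `(0, w)` with `w ~ Beta(1, β)`, is below `x` satisfies
`β [∫₀ˣ (1−w)^{β−1} dw + x ∫ₓ¹ w⁻¹ (1−w)^{β−1} dw] ≤ β x (1 + log(1/x))`. -/
theorem stmt13 (β x : ℝ) (hβ : 1 < β) (hx : x ∈ Set.Ioo (0:ℝ) 1) :
    β * ((∫ w in (0:ℝ)..x, (1 - w) ^ (β - 1)) +
        x * ∫ w in x..(1:ℝ), w⁻¹ * (1 - w) ^ (β - 1))
      ≤ β * x * (1 + Real.log (1 / x)) := by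
  obtain ⟨hx0, hx1⟩ := hx
  have hexp : (0:ℝ) < β - 1 := by linarith
  have hcont : Continuous (fun w : ℝ => (1 - w) ^ (β - 1)) :=
    (continuous_const.sub continuous_id).rpow_const (fun w => Or.inr hexp.le)
  have hle1 : ∀ w ∈ Set.Icc (0:ℝ) 1, (1 - w) ^ (β - 1) ≤ 1 := by
    intro w hw
    exact Real.rpow_le_one (by linarith [hw.2]) (by linarith [hw.1]) hexp.le
  -- first integral ≤ x
  have hA : (∫ w in (0:ℝ)..x, (1 - w) ^ (β - 1)) ≤ x := by
    have := intervalIntegral.integral_mono_on (μ := MeasureTheory.volume) (f := fun w : ℝ => (1 - w) ^ (β - 1))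
      (g := fun _ : ℝ => (1:ℝ)) hx0.le (hcont.intervalIntegrable _ _)
      (continuous_const.intervalIntegrable _ _)
      (fun w hw => hle1 w ⟨hw.1, by linarith [hw.2]⟩)
    simpa using this
  -- second integral ≤ log (1/x)
  have hB : (∫ w in x..(1:ℝ), w⁻¹ * (1 - w) ^ (β - 1)) ≤ Real.log (1 / x) := by
    have hinv : (∫ w in x..(1:ℝ), w⁻¹) = Real.log (1 / x) := by
      rw [integral_inv (by
        intro h
        rcases Set.mem_uIcc.1 h with h | h <;> linarith [h.1, h.2])]
    rw [← hinv]
    apply intervalIntegral.integral_mono_on (by linarith)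
    · apply ContinuousOn.intervalIntegrable
      apply ContinuousOn.mul
      · exact continuousOn_inv₀.mono (by
          intro w hw
          rcases Set.mem_uIcc.1 hw with h | h <;> simp <;> intro h0 <;> nlinarith [h.1, h.2])
      · exact hcont.continuousOn
    · apply ContinuousOn.intervalIntegrable
      exact continuousOn_inv₀.mono (by
        intro w hw
        rcases Set.mem_uIcc.1 hw with h | h <;> simp <;> intro h0 <;> nlinarith [h.1, h.2])
    · intro w hw
      have hw0 : 0 < w := lt_of_lt_of_le hx0 hw.1
      have : (1 - w) ^ (β - 1) ≤ 1 := hle1 w ⟨hw0.le, hw.2⟩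
      calc w⁻¹ * (1 - w) ^ (β - 1) ≤ w⁻¹ * 1 :=
            mul_le_mul_of_nonneg_left this (inv_nonneg.2 hw0.le)
        _ = w⁻¹ := mul_one _
  have hApos : (0:ℝ) ≤ β := by linarith
  nlinarith [mul_le_mul_of_nonneg_left hA hApos,
    mul_le_mul_of_nonneg_left hB (mul_nonneg hApos hx0.le)]
end

section
/- Let α > 0, let n ≥ 2 be an integer, and let x ∈ (0,1). On a probability space let E_1,…,E_n, G*, U_1,…,U_n be jointly independent with E_i ~ Gamma(1,1) (standard exponential), G* ~ Gamma(α, 1), and U_i ~ Uniform(0,1). Set T = G* + Σ_{j=1}^n E_j, w_i = E_i/T, and u_i = w_i·U_i. Then P( min_{1≤i≤n} u_i ≤ x ) ≤ n·(α + n − 1)·x·(1 + log(1/x)). -/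
/-!
Almost surely `T > 0`, and then `min_i u_i ≤ x` forces `E_i (U_i - x) ≤ x B_i` for some `i`,
where `B_i = T - E_i = G* + ∑_{j ≠ i} E_j` is independent of `(U_i, E_i)` and has Laplace
transform `E[exp(-t B_i)] = (1 + t)^(-β)`, `β = α + n - 1 ≥ 1`. Given `U_i = v > x`, the
exponential `E_i` falls below `t B_i`, `t = x / (v - x)`, with probability
`1 - (1 + t)^(-β) ≤ β t / (1 + t) = β x / v` (Bernoulli). Integrating over `v` gives
`x + β x log(1/x) ≤ β x (1 + log(1/x))`, and a union bound over `i` gives the factor `n`.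
-/

open MeasureTheory ProbabilityTheory Real Set
open scoped ENNReal

lemma one_sub_rpow_le_mul_one_sub {y β : ℝ} (hy : 0 ≤ y) (hβ : 1 ≤ β) :
    1 - y ^ β ≤ β * (1 - y) := by
  have := one_add_mul_self_le_rpow_one_add (s := y - 1) (by linarith) hβ
  rw [add_sub_cancel] at this
  linarith

lemma setLIntegral_Ioo_zero_one_le {x c : ℝ} (hx0 : 0 < x) (hx1 : x < 1) (hc : 0 ≤ c)
    {h : ℝ → ℝ≥0∞} (h_le_one : ∀ v, h v ≤ 1) (h_le : ∀ v, x < v → h v ≤ ENNReal.ofReal (c / v)) :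
    ∫⁻ v in Ioo 0 1, h v ≤ ENNReal.ofReal (x + c * log (1 / x)) := by
  have hdisj : Disjoint (Ioc 0 x) (Ioo x 1) :=
    Set.disjoint_left.2 fun v hv hv' => (not_lt.2 hv.2) hv'.1
  have hinv : IntegrableOn (fun v : ℝ => c / v) (Ioo x 1) :=
    (ContinuousOn.integrableOn_Icc (continuousOn_const.div continuousOn_id
      fun v hv => (hx0.trans_le hv.1).ne')).mono_set Ioo_subset_Icc_self
  have hright : ∫⁻ v in Ioo x 1, ENNReal.ofReal (c / v) = ENNReal.ofReal (c * log (1 / x)) := by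
    rw [← ofReal_integral_eq_lintegral_ofReal hinv (ae_restrict_of_forall_mem measurableSet_Ioo
      fun v hv => div_nonneg hc (hx0.trans hv.1).le), ← integral_Ioc_eq_integral_Ioo,
      ← intervalIntegral.integral_of_le hx1.le]
    simp_rw [div_eq_mul_inv c]
    rw [intervalIntegral.integral_const_mul, integral_inv_of_pos hx0 one_pos]
  rw [← Ioc_union_Ioo_eq_Ioo hx0.le hx1, lintegral_union measurableSet_Ioo hdisj,
    ENNReal.ofReal_add hx0.le (by positivity [log_nonneg (one_le_one_div hx0 hx1.le)])]
  gcongr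
  · calc ∫⁻ v in Ioc 0 x, h v ≤ ∫⁻ _ in Ioc 0 x, 1 := lintegral_mono h_le_one
      _ = ENNReal.ofReal x := by simp
  · rw [← hright]
    exact setLIntegral_mono' measurableSet_Ioo fun v hv => h_le v hv.1

lemma exists_mul_sub_le_of_iInf_div_mul_le {ι : Type*} [Finite ι] [Nonempty ι] {e u : ι → ℝ}
    {T x : ℝ} (hT : 0 < T) (h : ⨅ i, e i / T * u i ≤ x) : ∃ i, e i * (u i - x) ≤ x * (T - e i) := by
  obtain ⟨i, hi⟩ := exists_eq_ciInf_of_finite (f := fun i => e i / T * u i)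
  refine ⟨i, ?_⟩
  rw [← hi, div_mul_eq_mul_div, div_le_iff₀ hT] at h
  linarith

lemma measure_iInf_div_mul_le_le_sum {Ω ι : Type*} [MeasurableSpace Ω] [Fintype ι] [Nonempty ι]
    {P : Measure Ω} {e u : ι → Ω → ℝ} {T : Ω → ℝ} (hT : ∀ᵐ ω ∂P, 0 < T ω) (x : ℝ) :
    P {ω | ⨅ i, e i ω / T ω * u i ω ≤ x}
      ≤ ∑ i, P {ω | e i ω * (u i ω - x) ≤ x * (T ω - e i ω)} := by
  refine (measure_mono_ae ?_).trans (measure_iUnion_fintype_le P _)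
  filter_upwards [hT] with ω hω hmin
  exact Set.mem_iUnion.2 (exists_mul_sub_le_of_iInf_div_mul_le hω hmin)

namespace ProbabilityTheory

lemma measurable_gammaPDF (a r : ℝ) : Measurable (gammaPDF a r) :=
  (measurable_gammaPDFReal a r).ennreal_ofReal

lemma ae_pos_gammaMeasure (a r : ℝ) : ∀ᵐ y ∂gammaMeasure a r, 0 < y := by
  rw [gammaMeasure, ae_withDensity_iff (measurable_gammaPDF a r)]
  filter_upwards [Measure.ae_ne volume 0] with y hy hpdf
  exact lt_of_le_of_ne (not_lt.mp fun hneg => hpdf (gammaPDF_of_neg hneg)) hy.symm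

lemma ae_pos_of_map_eq_gammaMeasure {Ω : Type*} [MeasurableSpace Ω] {μ : Measure Ω} {X : Ω → ℝ}
    (hX : AEMeasurable X μ) {a r : ℝ} (hlaw : μ.map X = gammaMeasure a r) :
    ∀ᵐ ω ∂μ, 0 < X ω :=
  ae_of_ae_map hX (hlaw ▸ ae_pos_gammaMeasure a r)

lemma gammaMeasure_one_Iic {r : ℝ} (hr : 0 < r) (c : ℝ) :
    gammaMeasure 1 r (Iic c) = ENNReal.ofReal (1 - exp (-(r * c))) := by
  have := isProbabilityMeasure_gammaMeasure one_pos hr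
  rw [← ofReal_cdf, ← expMeasure, cdf_expMeasure_eq hr]
  split_ifs with hc
  · rfl
  · rw [ENNReal.ofReal_zero, eq_comm, ENNReal.ofReal_eq_zero, sub_nonpos, one_le_exp_iff]
    nlinarith

lemma lintegral_exp_neg_mul_gammaMeasure {a r t : ℝ} (ha : 0 < a) (hr : 0 < r) (ht : 0 ≤ t) :
    ∫⁻ y, ENNReal.ofReal (exp (-(t * y))) ∂gammaMeasure a r
      = ENNReal.ofReal ((r / (r + t)) ^ a) := by
  have hrt : 0 < r + t := by linarith
  have hpdf : ∀ y, gammaPDF a r y * ENNReal.ofReal (exp (-(t * y)))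
      = ENNReal.ofReal ((r / (r + t)) ^ a) * gammaPDF a (r + t) y := by
    intro y
    rcases lt_or_ge y 0 with hy | hy
    · simp [gammaPDF_of_neg hy]
    rw [gammaPDF_of_nonneg hy, gammaPDF_of_nonneg hy, ← ENNReal.ofReal_mul (by positivity),
      ← ENNReal.ofReal_mul (by positivity), div_rpow hr.le hrt.le]
    congr 1
    rw [show -((r + t) * y) = -(r * y) + -(t * y) by ring, exp_add]
    field_simp
  rw [gammaMeasure, lintegral_withDensity_eq_lintegral_mul _ (measurable_gammaPDF a r)
    (by fun_prop)]
  simp_rw [Pi.mul_apply, hpdf]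
  rw [lintegral_const_mul _ (measurable_gammaPDF a (r + t)),
    lintegral_gammaPDF_eq_one ha hrt, mul_one]

lemma lintegral_gammaMeasure_one_Iic_mul_le {ρ : Measure ℝ} [IsProbabilityMeasure ρ] {β t : ℝ}
    (hβ : 1 ≤ β) (ht : 0 ≤ t) (hρ : ∀ᵐ b ∂ρ, 0 ≤ b)
    (hL : ∫⁻ b, ENNReal.ofReal (exp (-(t * b))) ∂ρ = ENNReal.ofReal ((1 / (1 + t)) ^ β)) :
    ∫⁻ b, gammaMeasure 1 1 (Iic (t * b)) ∂ρ ≤ ENNReal.ofReal (β * (1 - 1 / (1 + t))) := by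
  have hcdf : ∀ b, gammaMeasure 1 1 (Iic (t * b)) = 1 - ENNReal.ofReal (exp (-(t * b))) := by
    intro b
    rw [gammaMeasure_one_Iic one_pos, one_mul, ENNReal.ofReal_sub _ (exp_pos _).le,
      ENNReal.ofReal_one]
  have hle_one : ∀ᵐ b ∂ρ, ENNReal.ofReal (exp (-(t * b))) ≤ 1 := by
    filter_upwards [hρ] with b hb
    exact ENNReal.ofReal_le_one.2 (exp_le_one_iff.2 (by nlinarith))
  simp_rw [hcdf]
  rw [lintegral_sub (by fun_prop) (hL ▸ ENNReal.ofReal_ne_top) hle_one, lintegral_one,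
    measure_univ, hL, ← ENNReal.ofReal_one, ← ENNReal.ofReal_sub _ (by positivity)]
  exact ENNReal.ofReal_le_ofReal (one_sub_rpow_le_mul_one_sub (by positivity) hβ)

lemma prod_gammaMeasure_setOf_mul_sub_le {ρ : Measure ℝ} [IsProbabilityMeasure ρ] {β x : ℝ}
    (hβ : 1 ≤ β) (hx0 : 0 < x) (hx1 : x < 1) (hρ : ∀ᵐ b ∂ρ, 0 ≤ b)
    (hL : ∀ t, 0 ≤ t →
      ∫⁻ b, ENNReal.ofReal (exp (-(t * b))) ∂ρ = ENNReal.ofReal ((1 / (1 + t)) ^ β)) :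
    (((volume.restrict (Ioo 0 1)).prod ρ).prod (gammaMeasure 1 1))
        {p | p.2 * (p.1.1 - x) ≤ x * p.1.2}
      ≤ ENNReal.ofReal (β * x * (1 + log (1 / x))) := by
  have := isProbabilityMeasure_gammaMeasure one_pos one_pos
  have hC : MeasurableSet {p : (ℝ × ℝ) × ℝ | p.2 * (p.1.1 - x) ≤ x * p.1.2} :=
    measurableSet_le (by fun_prop) (by fun_prop)
  have h_le_one : ∀ v, ∫⁻ b, gammaMeasure 1 1 {a | a * (v - x) ≤ x * b} ∂ρ ≤ 1 :=
    fun v => (lintegral_mono fun _ => prob_le_one).trans_eq (by simp)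
  have h_le : ∀ v, x < v →
      ∫⁻ b, gammaMeasure 1 1 {a | a * (v - x) ≤ x * b} ∂ρ ≤ ENNReal.ofReal (β * x / v) := by
    intro v hv
    have hvx : 0 < v - x := sub_pos.2 hv
    have ht : 0 ≤ x / (v - x) := div_nonneg hx0.le hvx.le
    have hslice : ∀ b, {a | a * (v - x) ≤ x * b} = Iic (x / (v - x) * b) := by
      intro b
      ext a
      rw [mem_Iic, div_mul_eq_mul_div, le_div_iff₀ hvx]
      rfl
    have hbound : β * (1 - 1 / (1 + x / (v - x))) = β * x / v := by
      have hv0 : v ≠ 0 := (hx0.trans hv).ne'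
      field_simp
      ring
    simp_rw [hslice, ← hbound]
    exact lintegral_gammaMeasure_one_Iic_mul_le hβ ht hρ (hL _ ht)
  rw [Measure.prod_apply hC, lintegral_prod _ (measurable_measure_prodMk_left hC).aemeasurable]
  calc _ ≤ ENNReal.ofReal (x + β * x * log (1 / x)) :=
        setLIntegral_Ioo_zero_one_le hx0 hx1 (by positivity) h_le_one fun v hv => by
          simpa only [mul_div_assoc] using h_le v hv
    _ ≤ ENNReal.ofReal (β * x * (1 + log (1 / x))) := by
        have := log_nonneg (one_le_one_div hx0 hx1.le)
        gcongr
        nlinarith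

section

variable {Ω ι : Type*} [MeasurableSpace Ω] {μ : Measure Ω}

lemma lintegral_exp_neg_mul_sum_of_gammaMeasure {X : ι → Ω → ℝ} (hX : iIndepFun X μ)
    (hXm : ∀ k, Measurable (X k)) {a : ι → ℝ} {r t : ℝ} (ha : ∀ k, 0 < a k) (hr : 0 < r)
    (hlaw : ∀ k, μ.map (X k) = gammaMeasure (a k) r) (s : Finset ι) (ht : 0 ≤ t) :
    ∫⁻ ω, ENNReal.ofReal (exp (-(t * ∑ k ∈ s, X k ω))) ∂μ
      = ENNReal.ofReal ((r / (r + t)) ^ ∑ k ∈ s, a k) := by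
  have hfactor : ∀ ω, ENNReal.ofReal (exp (-(t * ∑ k ∈ s, X k ω)))
      = ∏ k ∈ s, ENNReal.ofReal (exp (-(t * X k ω))) := by
    intro ω
    rw [Finset.mul_sum, ← Finset.sum_neg_distrib, exp_sum,
      ENNReal.ofReal_prod_of_nonneg fun k _ => (exp_pos _).le]
  simp_rw [hfactor]
  rw [lintegral_prod_eq_prod_lintegral_of_indepFun s
      (fun k ω => ENNReal.ofReal (exp (-(t * X k ω))))
      (hX.comp (fun _ y => ENNReal.ofReal (exp (-(t * y)))) fun _ => by fun_prop)
      fun k => by fun_prop,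
    rpow_sum_of_pos (by positivity), ENNReal.ofReal_prod_of_nonneg fun k _ => by positivity]
  refine Finset.prod_congr rfl fun k _ => ?_
  rw [← lintegral_map (f := fun y => ENNReal.ofReal (exp (-(t * y)))) (by fun_prop) (hXm k),
    hlaw k, lintegral_exp_neg_mul_gammaMeasure (ha k) hr ht]

lemma iIndepFun.map_prodMk_finsetSum {β : Type*} [MeasurableSpace β] [AddCommMonoid β]
    [MeasurableAdd₂ β] {f : ι → Ω → β} (h : iIndepFun f μ)
    (hf : ∀ j, Measurable (f j)) {s : Finset ι} {i k : ι} (hi : i ∉ s) (hk : k ∉ s)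
    (hik : i ≠ k) :
    μ.map (fun ω => ((f i ω, ∑ j ∈ s, f j ω), f k ω))
      = ((μ.map (f i)).prod (μ.map fun ω => ∑ j ∈ s, f j ω)).prod (μ.map (f k)) := by
  classical
  have := h.isProbabilityMeasure
  have hsum : Measurable fun ω => ∑ j ∈ s, f j ω := Finset.measurable_fun_sum s fun j _ => hf j
  have hpair : IndepFun (f i) (fun ω => ∑ j ∈ s, f j ω) μ := by
    simpa only [Finset.sum_fn] using (h.indepFun_finsetSum_of_notMem hf hi).symm
  have htriple : IndepFun (fun ω => (f i ω, ∑ j ∈ s, f j ω)) (f k) μ := by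
    have hdisj : Disjoint (insert i s) {k} := by simp [hk, hik.symm]
    have := (h.indepFun_finset _ _ hdisj hf).comp
      (φ := fun v => (v ⟨i, Finset.mem_insert_self i s⟩,
        ∑ j ∈ s.attach, v ⟨j, Finset.mem_insert_of_mem j.2⟩))
      (ψ := fun v => v ⟨k, Finset.mem_singleton_self k⟩) (_mγ' := ‹MeasurableSpace β›)
      (by fun_prop) (by fun_prop)
    convert this using 2 with ω
    · simp only [Function.comp_apply]
      rw [← Finset.sum_attach s]
    · rfl
  rw [(indepFun_iff_map_prod_eq_prod_map_map ((hf i).prodMk hsum).aemeasurable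
      (hf k).aemeasurable).1 htriple,
    (indepFun_iff_map_prod_eq_prod_map_map (hf i).aemeasurable hsum.aemeasurable).1 hpair]

lemma iIndepFun.measure_mul_sub_le_sum_le {f : ι → Ω → ℝ} (h : iIndepFun f μ)
    (hf : ∀ j, Measurable (f j)) {s : Finset ι} {i k : ι} (hi : i ∉ s) (hk : k ∉ s)
    (hik : i ≠ k) (hU : μ.map (f i) = volume.restrict (Ioo 0 1))
    (hE : μ.map (f k) = gammaMeasure 1 1) (hpos : ∀ᵐ ω ∂μ, 0 ≤ ∑ j ∈ s, f j ω) {β x : ℝ}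
    (hβ : 1 ≤ β) (hx0 : 0 < x) (hx1 : x < 1)
    (hL : ∀ t, 0 ≤ t → ∫⁻ ω, ENNReal.ofReal (exp (-(t * ∑ j ∈ s, f j ω))) ∂μ
      = ENNReal.ofReal ((1 / (1 + t)) ^ β)) :
    μ {ω | f k ω * (f i ω - x) ≤ x * ∑ j ∈ s, f j ω}
      ≤ ENNReal.ofReal (β * x * (1 + log (1 / x))) := by
  have hsum : Measurable fun ω => ∑ j ∈ s, f j ω := Finset.measurable_fun_sum s fun j _ => hf j
  have := h.isProbabilityMeasure
  have := Measure.isProbabilityMeasure_map (μ := μ) hsum.aemeasurable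
  have hC : MeasurableSet {p : (ℝ × ℝ) × ℝ | p.2 * (p.1.1 - x) ≤ x * p.1.2} :=
    measurableSet_le (by fun_prop) (by fun_prop)
  have hmap := h.map_prodMk_finsetSum hf hi hk hik
  rw [hU, hE] at hmap
  rw [← Set.preimage_ofPred_eq (p := fun p : (ℝ × ℝ) × ℝ => p.2 * (p.1.1 - x) ≤ x * p.1.2)
      (f := fun ω => ((f i ω, ∑ j ∈ s, f j ω), f k ω)),
    ← Measure.map_apply (by fun_prop) hC, hmap]
  refine prod_gammaMeasure_setOf_mul_sub_le hβ hx0 hx1 (ae_map_iff hsum.aemeasurable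
    measurableSet_Ici |>.2 hpos) fun t ht => ?_
  rw [lintegral_map (by fun_prop) hsum, hL t ht]

lemma iIndepFun.measure_mul_sub_le_sum_sub_le {κ : Type*} [Fintype κ] [DecidableEq κ]
    {g : κ → Ω → ℝ} {U : ι → Ω → ℝ} (h : iIndepFun (Sum.elim g U) μ)
    (hg : ∀ k, Measurable (g k)) (hU : ∀ i, Measurable (U i)) {a : κ → ℝ} (ha : ∀ k, 0 < a k)
    (hlaw : ∀ k, μ.map (g k) = gammaMeasure (a k) 1) {k : κ} (hak : a k = 1) {i : ι}
    (hUi : μ.map (U i) = volume.restrict (Ioo 0 1)) {x : ℝ} (hβ : 1 ≤ ∑ l, a l - 1)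
    (hx0 : 0 < x) (hx1 : x < 1) :
    μ {ω | g k ω * (U i ω - x) ≤ x * (∑ l, g l ω - g k ω)}
      ≤ ENNReal.ofReal ((∑ l, a l - 1) * x * (1 + log (1 / x))) := by
  set s : Finset (κ ⊕ ι) := (Finset.univ.erase k).map Function.Embedding.inl
  have hs : ∀ ω, ∑ j ∈ s, Sum.elim g U j ω = ∑ l ∈ Finset.univ.erase k, g l ω :=
    fun ω => Finset.sum_map _ _ _
  have hpos : ∀ᵐ ω ∂μ, ∀ l, 0 < g l ω :=
    ae_all_iff.2 fun l => ae_pos_of_map_eq_gammaMeasure (hg l).aemeasurable (hlaw l)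
  simp_rw [← Finset.sum_erase_eq_sub (Finset.mem_univ k), ← hs]
  have hF : ∀ j, Measurable (Sum.elim g U j) := by rintro (l | j); exacts [hg l, hU j]
  refine h.measure_mul_sub_le_sum_le (i := .inr i) (k := .inl k) hF (by simp [s]) (by simp [s])
    Sum.inr_ne_inl hUi (hak ▸ hlaw k) ?_ hβ hx0 hx1 fun t ht => ?_
  · filter_upwards [hpos] with ω hω
    exact hs ω ▸ Finset.sum_nonneg fun l _ => (hω l).le
  · simp_rw [hs]
    have hgind : iIndepFun g μ := (h.precomp Sum.inl_injective :)
    rw [lintegral_exp_neg_mul_sum_of_gammaMeasure hgind hg ha one_pos hlaw _ ht,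
      Finset.sum_erase_eq_sub (Finset.mem_univ k), hak]

end

end ProbabilityTheory

theorem stmt14_general {Ω : Type*} [MeasurableSpace Ω] (P : Measure Ω)
    (α : ℝ) (hα : 0 < α) (n : ℕ) (hn : 2 ≤ n) (x : ℝ) (hx : x ∈ Set.Ioo (0:ℝ) 1)
    (E : Fin n → Ω → ℝ) (Gstar : Ω → ℝ) (U : Fin n → Ω → ℝ)
    (hEm : ∀ i, Measurable (E i)) (hGsm : Measurable Gstar)
    (hUm : ∀ i, Measurable (U i))
    (hindep : iIndepFun
      (fun j : Option (Fin n) ⊕ Fin n =>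
        Sum.elim (fun o : Option (Fin n) => Option.elim o Gstar E) U j) P)
    (hEd : ∀ i, Measure.map (E i) P = gammaMeasure 1 1)
    (hGsd : Measure.map Gstar P = gammaMeasure α 1)
    (hUd : ∀ i, Measure.map (U i) P = volume.restrict (Set.Ioo (0:ℝ) 1)) :
    P {ω | (⨅ i, (E i ω / (Gstar ω + ∑ j, E j ω)) * U i ω) ≤ x}
      ≤ ENNReal.ofReal ((n : ℝ) * (α + n - 1) * x * (1 + Real.log (1 / x))) := by
  obtain ⟨hx0, hx1⟩ := hx
  have : Nonempty (Fin n) := ⟨⟨0, by omega⟩⟩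
  set g : Option (Fin n) → Ω → ℝ := fun o => Option.elim o Gstar E
  set a : Option (Fin n) → ℝ := fun o => Option.elim o α fun _ => 1
  have hgm : ∀ o, Measurable (g o) := by rintro (_ | j); exacts [hGsm, hEm j]
  have hlaw : ∀ o, P.map (g o) = gammaMeasure (a o) 1 := by rintro (_ | j); exacts [hGsd, hEd j]
  have ha : ∀ o, 0 < a o := by rintro (_ | j); exacts [hα, one_pos]
  have hT : ∀ ω, Gstar ω + ∑ j, E j ω = ∑ o, g o ω :=
    fun ω => (Fintype.sum_option fun o => g o ω).symm
  have hshape : ∑ o, a o - 1 = α + n - 1 := by simp [a, Fintype.sum_option]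
  have hβ : 1 ≤ ∑ o, a o - 1 := by
    have : (2 : ℝ) ≤ n := by exact_mod_cast hn
    linarith
  have hTpos : ∀ᵐ ω ∂P, 0 < Gstar ω + ∑ j, E j ω := by
    filter_upwards [ae_all_iff.2 fun o => ae_pos_of_map_eq_gammaMeasure (hgm o).aemeasurable
      (hlaw o)] with ω hω
    exact hT ω ▸ Finset.sum_pos (fun o _ => hω o) Finset.univ_nonempty
  calc _ ≤ ∑ i, P {ω | E i ω * (U i ω - x) ≤ x * (Gstar ω + ∑ j, E j ω - E i ω)} :=
        measure_iInf_div_mul_le_le_sum hTpos x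
    _ ≤ ∑ _i : Fin n, ENNReal.ofReal ((α + n - 1) * x * (1 + Real.log (1 / x))) :=
        Finset.sum_le_sum fun i _ => by
          have := hindep.measure_mul_sub_le_sum_sub_le hgm hUm ha hlaw (k := some i) rfl (hUd i)
            hβ hx0 hx1
          simp_rw [hT]
          rwa [hshape] at this
    _ = _ := by
        rw [Finset.sum_const, Finset.card_univ, Fintype.card_fin, nsmul_eq_mul,
          ← ENNReal.ofReal_natCast, ← ENNReal.ofReal_mul (by positivity)]
        ring_nf

/-- Lower-tail bound on the minimum slice variable under the singleton partition:
with `E_1, …, E_n ~ Gamma(1,1)`, `G* ~ Gamma(α,1)`, `U_1, …, U_n ~ Uniform(0,1)`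
jointly independent, `T = G* + Σ_j E_j`, `w_i = E_i/T`, `u_i = w_i U_i`:
`P(min_i u_i ≤ x) ≤ n (α + n − 1) x (1 + log(1/x))`. -/
theorem stmt14 {Ω : Type*} [MeasurableSpace Ω] (P : Measure Ω) [IsProbabilityMeasure P]
    (α : ℝ) (hα : 0 < α) (n : ℕ) (hn : 2 ≤ n) (x : ℝ) (hx : x ∈ Set.Ioo (0:ℝ) 1)
    (E : Fin n → Ω → ℝ) (Gstar : Ω → ℝ) (U : Fin n → Ω → ℝ)
    (hEm : ∀ i, Measurable (E i)) (hGsm : Measurable Gstar)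
    (hUm : ∀ i, Measurable (U i))
    (hindep : iIndepFun
      (fun j : Option (Fin n) ⊕ Fin n =>
        Sum.elim (fun o : Option (Fin n) => Option.elim o Gstar E) U j) P)
    (hEd : ∀ i, Measure.map (E i) P = gammaMeasure 1 1)
    (hGsd : Measure.map Gstar P = gammaMeasure α 1)
    (hUd : ∀ i, Measure.map (U i) P = volume.restrict (Set.Ioo (0:ℝ) 1)) :
    P {ω | (⨅ i, (E i ω / (Gstar ω + ∑ j, E j ω)) * U i ω) ≤ x}
      ≤ ENNReal.ofReal ((n : ℝ) * (α + n - 1) * x * (1 + Real.log (1 / x))) :=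
  stmt14_general P α hα n hn x hx E Gstar U hEm hGsm hUm hindep hEd hGsd hUd
end
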